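/- Let a, b ∈ ℂ, and write φ_{a,b}(X) = X·F₁(X)²/F₂(X)² for the rational function with parameters (a,b). Then for every x ∈ ℂ at which all denominators involved are nonzero, one has φ_{a, −a−b−1}(x) = 1 − φ_{a,b}(1 − x). -/

import Mathlib

/-- The rational function `φ_{a,b}(x) = x·F₁(x)²/F₂(x)²`, where
`F₁(X) = X² + (2a + 2b + a²)X + 2ab + b²` and
`F₂(X) = (2a+1)X² + (a² + 2ab + 2b)X + b²`. -/
noncomputable def phi (a b x : ℂ) : ℂ :=
  x * (x ^ 2 + (2 * a + 2 * b + a ^ 2) * x + 2 * a * b + b ^ 2) ^ 2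
    / ((2 * a + 1) * x ^ 2 + (a ^ 2 + 2 * a * b + 2 * b) * x + b ^ 2) ^ 2

/-!
The substitution `b ↦ -a-b-1` turns `F₂(x)` into `F₂(1-x)`, so both sides of the identity have
the denominator `F₂_{a,b}(1-x)²`, and what remains is the polynomial identity
`x·F₁_{a,-a-b-1}(x)² + (1-x)·F₁_{a,b}(1-x)² = F₂_{a,b}(1-x)²`.
-/

section Polynomials

variable {R : Type*} [CommRing R]

def F₁ (a b x : R) : R :=
  x ^ 2 + (2 * a + 2 * b + a ^ 2) * x + 2 * a * b + b ^ 2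

def F₂ (a b x : R) : R :=
  (2 * a + 1) * x ^ 2 + (a ^ 2 + 2 * a * b + 2 * b) * x + b ^ 2

theorem F₂_tau (a b x : R) : F₂ a (-a - b - 1) x = F₂ a b (1 - x) := by
  unfold F₂
  ring

theorem mul_F₁_tau_sq_add_mul_F₁_one_sub_sq (a b x : R) :
    x * F₁ a (-a - b - 1) x ^ 2 + (1 - x) * F₁ a b (1 - x) ^ 2 = F₂ a b (1 - x) ^ 2 := by
  unfold F₁ F₂
  ring

end Polynomials

theorem phi_eq (a b x : ℂ) : phi a b x = x * F₁ a b x ^ 2 / F₂ a b x ^ 2 := rfl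

theorem phi_transform_tau_general (a b x : ℂ)
    (hden₁ : (2 * a + 1) * (1 - x) ^ 2 + (a ^ 2 + 2 * a * b + 2 * b) * (1 - x) + b ^ 2 ≠ 0) :
    phi a (-a - b - 1) x = 1 - phi a b (1 - x) := by
  have hF₂ : F₂ a b (1 - x) ^ 2 ≠ 0 := pow_ne_zero 2 hden₁
  rw [eq_sub_iff_add_eq, phi_eq, phi_eq, F₂_tau, ← add_div, div_eq_one_iff_eq hF₂,
    mul_F₁_tau_sq_add_mul_F₁_one_sub_sq]

/-- For any `x ∈ ℂ` at which all denominators involved are nonzero, one has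
`φ_{a, −a−b−1}(x) = 1 − φ_{a,b}(1 − x)`. -/
theorem phi_transform_tau (a b x : ℂ)
    (hden₁ : (2 * a + 1) * (1 - x) ^ 2 + (a ^ 2 + 2 * a * b + 2 * b) * (1 - x) + b ^ 2 ≠ 0)
    (hden₂ : (2 * a + 1) * x ^ 2
        + (a ^ 2 + 2 * a * (-a - b - 1) + 2 * (-a - b - 1)) * x + (-a - b - 1) ^ 2 ≠ 0) :
    phi a (-a - b - 1) x = 1 - phi a b (1 - x) :=
  phi_transform_tau_general a b x hden₁
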